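/- arXiv:1007.0223 — 2 statements merged into one kernel-verified Lean document; each statement's English description precedes it below -/
import Mathlib

section
/- Let k be a field and V a linearly compact topological k-vector space. Then the open subspaces of V are precisely the closed subspaces of finite codimension: a subspace W ⊆ V is open if and only if W is closed and dim_k(V/W) is finite. -/
/-- A *linear topology* on a left `R`-module `M`: the module operations are continuous,
and `0` has a neighborhood basis consisting of submodules. -/
def IsLinearTopology' (R M : Type*) [Ring R] [AddCommGroup M] [Module R M]
    [TopologicalSpace M] : Prop :=
  ContinuousAdd M ∧ ContinuousNeg M ∧ (∀ r : R, Continuous fun m : M => r • m) ∧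
    ∀ U ∈ nhds (0 : M), ∃ N : Submodule R M, (N : Set M) ∈ nhds (0 : M) ∧ (N : Set M) ⊆ U

/-- `M` is *linearly compact*: its topology is a Hausdorff linear topology such that every
family of cosets of closed submodules of `M` with the finite intersection property has
nonempty intersection. -/
def IsLinearlyCompact (R M : Type*) [Ring R] [AddCommGroup M] [Module R M]
    [TopologicalSpace M] : Prop :=
  IsLinearTopology' R M ∧ T2Space M ∧
    ∀ 𝒞 : Set (Set M),
      (∀ C ∈ 𝒞, ∃ (N : Submodule R M) (x : M),
        IsClosed (N : Set M) ∧ C = (x + ·) '' (N : Set M)) →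
      (∀ 𝒟 ⊆ 𝒞, 𝒟.Finite → (⋂₀ 𝒟).Nonempty) →
      (⋂₀ 𝒞).Nonempty

open Filter Topology

namespace IsLinearTopology'

variable {R M : Type*} [Ring R] [AddCommGroup M] [Module R M] [TopologicalSpace M]

theorem isTopologicalAddGroup (h : IsLinearTopology' R M) : IsTopologicalAddGroup M :=
  have : ContinuousAdd M := h.1
  have : ContinuousNeg M := h.2.1
  { }

theorem isLinearTopology (h : IsLinearTopology' R M) : IsLinearTopology R M :=
  isLinearTopology_iff_hasBasis_submodule.2
    ⟨fun U ↦ ⟨h.2.2.2 U, fun ⟨_, hN, hNU⟩ ↦ mem_of_superset hN hNU⟩⟩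

end IsLinearTopology'

section LinearTopology

variable {R M : Type*} [Ring R] [AddCommGroup M] [Module R M] [TopologicalSpace M]
  [IsTopologicalAddGroup M] [IsLinearTopology R M]

theorem Submodule.mem_closure_of_forall_mem_sup {W : Submodule R M} {v : M}
    (hv : ∀ N : Submodule R M, (N : Set M) ∈ 𝓝 0 → v ∈ W ⊔ N) : v ∈ closure (W : Set M) := by
  refine mem_closure_iff_nhds_zero.2 fun T hT ↦ ?_
  obtain ⟨N, hN, hNT⟩ := (IsLinearTopology.hasBasis_submodule R).mem_iff.1 hT
  obtain ⟨w, hw, n, hn, rfl⟩ := Submodule.mem_sup.1 (hv N hN)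
  exact ⟨w, hw, hNT (by simpa using N.neg_mem hn)⟩

/-- The open submodules are directed downwards, so if `U` has minimal image in `M ⧸ W`, then that
image lies below the image of every open `N`; hence `U ≤ W ⊔ N` for all such `N`, and
`U ≤ closure W = W`. -/
theorem Submodule.isOpen_of_isClosed_of_isArtinian_quotient {W : Submodule R M}
    (hW : IsClosed (W : Set M)) [IsArtinian R (M ⧸ W)] : IsOpen (W : Set M) := by
  obtain ⟨_, ⟨U, hU, rfl⟩, hmin⟩ := IsArtinian.set_has_minimal
    {Q | ∃ N : Submodule R M, (N : Set M) ∈ 𝓝 0 ∧ N.map W.mkQ = Q} ⟨_, ⊤, by simp, rfl⟩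
  have hUW : U ≤ W := fun v hv ↦ hW.closure_subset_iff.2 le_rfl <|
    Submodule.mem_closure_of_forall_mem_sup fun N hN ↦ by
      have hNU : (N ⊓ U).map W.mkQ = U.map W.mkQ :=
        (Submodule.map_mono inf_le_right).eq_of_not_lt
          (hmin _ ⟨N ⊓ U, inter_mem hN hU, rfl⟩)
      rw [← Submodule.comap_map_mkQ]
      exact Submodule.map_mono inf_le_left (hNU ▸ Submodule.mem_map_of_mem hv)
  exact W.toAddSubgroup.isOpen_of_mem_nhds (mem_of_superset hU hUW)

end LinearTopology

namespace IsLinearlyCompact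

variable {R M : Type*} [Ring R] [AddCommGroup M] [Module R M] [TopologicalSpace M]

theorem exists_forall_sub_mem (h : IsLinearlyCompact R M) {ι : Type*} (N : ι → Submodule R M)
    (x : ι → M) (hN : ∀ i, IsClosed (N i : Set M))
    (hfin : ∀ s : Finset ι, ∃ v, ∀ i ∈ s, v - x i ∈ N i) : ∃ v, ∀ i, v - x i ∈ N i := by
  set C : ι → Set M := fun i ↦ (x i + ·) '' (N i : Set M)
  have mem_C {v i} : v ∈ C i ↔ v - x i ∈ N i := by
    simp [C, Set.image_add_left, neg_add_eq_sub]
  obtain ⟨v, hv⟩ := h.2.2 (Set.range C) (by rintro _ ⟨i, rfl⟩; exact ⟨N i, x i, hN i, rfl⟩) <| by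
    intro 𝒟 h𝒟 h𝒟fin
    by_contra hempty
    obtain ⟨s, -, hs, hempty⟩ := Set.exists_subset_image_finite_and
      (p := fun 𝒟 ↦ ¬(⋂₀ 𝒟).Nonempty) |>.1 ⟨𝒟, Set.image_univ ▸ h𝒟, h𝒟fin, hempty⟩
    lift s to Finset ι using hs
    obtain ⟨v, hv⟩ := hfin s
    exact hempty ⟨v, by simpa [mem_C] using hv⟩
  exact ⟨v, fun i ↦ mem_C.1 (hv _ ⟨i, rfl⟩)⟩

/-- The cosets `{v | b.coord i (W.mkQ v) = 1}` have the finite intersection property, witnessed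
by lifts of `∑ i ∈ s, b i`, but a point in all of them would have infinitely many nonzero
coordinates. -/
theorem finite_of_basis_quotient [Nontrivial R] (h : IsLinearlyCompact R M)
    {W : Submodule R M} (hW : IsOpen (W : Set M)) {ι : Type*} (b : Module.Basis ι R (M ⧸ W)) :
    Finite ι := by
  have := h.1.isTopologicalAddGroup
  refine not_infinite_iff_finite.1 fun hι ↦ ?_
  set f : ι → M →ₗ[R] R := fun i ↦ (b.coord i).comp W.mkQ
  have hf {v i} : f i v = b.repr (W.mkQ v) i := rfl
  choose x hx using fun i ↦ W.mkQ_surjective (b i)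
  have hker (i) : IsClosed (LinearMap.ker (f i) : Set M) := by
    refine AddSubgroup.isClosed_of_isOpen (LinearMap.ker (f i)).toAddSubgroup
      (AddSubgroup.isOpen_mono (H₁ := W.toAddSubgroup) (fun v hv ↦ ?_) hW)
    simp [hf, (Submodule.Quotient.mk_eq_zero W).2 hv]
  obtain ⟨v, hv⟩ := h.exists_forall_sub_mem (fun i ↦ LinearMap.ker (f i)) x hker fun s ↦ by
    classical
    refine ⟨∑ j ∈ s, x j, fun i hi ↦ ?_⟩
    rw [LinearMap.mem_ker, map_sub, hf, hf, map_sum, hx, sub_eq_zero]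
    simp [hx, Finsupp.single_apply, hi]
  obtain ⟨i, hi⟩ := Infinite.exists_notMem_finset (b.repr (W.mkQ v)).support
  have hvi : f i v = f i (x i) := by rw [← sub_eq_zero, ← map_sub]; exact hv i
  rw [hf, hf, hx, b.repr_self, Finsupp.single_eq_same] at hvi
  exact hi (Finsupp.mem_support_iff.2 (hvi ▸ one_ne_zero))

end IsLinearlyCompact

/-- In a linearly compact vector space, the open subspaces are precisely the closed
subspaces of finite codimension. -/
theorem open_iff_closed_finite_codim (k V : Type*) [Field k] [AddCommGroup V]
    [Module k V] [TopologicalSpace V] (h : IsLinearlyCompact k V) (W : Submodule k V) :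
    IsOpen (W : Set V) ↔ IsClosed (W : Set V) ∧ FiniteDimensional k (V ⧸ W) := by
  have := h.1.isTopologicalAddGroup
  have := h.1.isLinearTopology
  refine ⟨fun hW ↦ ⟨W.toAddSubgroup.isClosed_of_isOpen hW, ?_⟩, fun ⟨hW, _⟩ ↦
    W.isOpen_of_isClosed_of_isArtinian_quotient hW⟩
  have := h.finite_of_basis_quotient hW (Module.Basis.ofVectorSpace k (V ⧸ W))
  exact Module.Finite.of_basis (Module.Basis.ofVectorSpace k (V ⧸ W))
end

section
/- Let k be a field and V a topological k-vector space whose topology is a linear topology. Then V is linearly compact if and only if V is isomorphic, as a topological vector space, to a direct product k^I of copies of k, where each factor k carries the discrete topology and k^I carries the product topology. -/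
universe u v

/-! Write `V'` for the space of continuous linear functionals on `V` (`k` discrete) and
`ev : V → (V')*` for evaluation. For a Hausdorff linear topology, linear compactness is
equivalent to surjectivity of `ev`. A linear form `λ` on `V'` is the system of equations
`φ v = λ φ`; its finite subsystems are solvable by linear algebra, so linear compactness solves
it. Conversely, since closed submodules are cut out by continuous functionals, a family of closed
cosets with the finite intersection property is a consistent system of such equations, which a
single `λ` encodes.

A basis `(bᵢ)` of `V'` identifies `(V')*` with `k^I`, so a linearly compact `V` is `k^I` as a
vector space. The inverse is continuous because an open submodule has finite codimension in a
linearly compact space, hence contains the common kernel of finitely many `bᵢ`. For `k^I` itself,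
`ev` is surjective because a continuous functional only involves finitely many coordinates. -/

open Filter Topology

section LinearTopology

variable {R M : Type*} [Ring R] [AddCommGroup M] [Module R M] [TopologicalSpace M]

theorem IsLinearTopology'.isTopologicalAddGroup_s13 (h : IsLinearTopology' R M) :
    IsTopologicalAddGroup M :=
  { toContinuousAdd := h.1, toContinuousNeg := h.2.1 }

theorem IsLinearTopology'.exists_isOpen_submodule_subset (h : IsLinearTopology' R M) {U : Set M}
    (hU : U ∈ 𝓝 0) : ∃ N : Submodule R M, IsOpen (N : Set M) ∧ (N : Set M) ⊆ U := by
  have := h.isTopologicalAddGroup_s13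
  obtain ⟨N, hN, hNU⟩ := h.2.2.2 U hU
  exact ⟨N, N.toAddSubgroup.isOpen_of_mem_nhds hN, hNU⟩

end LinearTopology

theorem LinearMap.setOf_apply_eq_eq_image_add_ker {R M M₂ : Type*} [Ring R] [AddCommGroup M]
    [AddCommGroup M₂] [Module R M] [Module R M₂] (f : M →ₗ[R] M₂) (x : M) :
    {v | f v = f x} = (x + ·) '' (LinearMap.ker f : Set M) := by
  ext v
  refine ⟨fun hv => ⟨v - x, by simpa [sub_eq_zero] using hv, add_sub_cancel x v⟩, ?_⟩
  rintro ⟨w, hw, rfl⟩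
  simp_all

theorem exists_forall_apply_eq_of_injective {k V W ι : Type*} [Field k] [AddCommGroup V]
    [Module k V] [AddCommGroup W] [Module k W] [Fintype ι] {B : W →ₗ[k] Module.Dual k V}
    (hB : Function.Injective B) (l : W →ₗ[k] k) (w : ι → W) :
    ∃ v, ∀ i, B (w i) v = l (w i) := by
  classical
  let P : V →ₗ[k] ι → k := LinearMap.pi fun i => B (w i)
  suffices (fun i => l (w i)) ∈ LinearMap.range P by
    obtain ⟨v, hv⟩ := this
    exact ⟨v, fun i => congrFun hv i⟩
  by_contra hl
  -- A functional on `k^ι` vanishing on the range of `P` is a relation `∑ aᵢ B (w i) = 0`,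
  -- which `l` respects because `B` is injective.
  obtain ⟨ψ, hψl, hψP⟩ := Submodule.exists_dual_map_eq_bot_of_notMem hl inferInstance
  let a : ι → k := fun i => ψ fun j => if i = j then 1 else 0
  have hψ : ∀ x, ψ x = ∑ i, x i * a i := fun x => by
    simpa [a, smul_eq_mul] using ψ.pi_apply_eq_sum_univ x
  have hrel : B (∑ i, a i • w i) = 0 := by
    ext v
    have : ψ (P v) = 0 := LinearMap.le_ker_iff_map.2 hψP (LinearMap.mem_range_self P v)
    simpa [hψ, P, mul_comm] using this
  apply hψl
  simpa [hψ, mul_comm] using congrArg l (hB (hrel.trans (map_zero B).symm))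

section ContinuousDual

variable {k V : Type*} [Field k] [TopologicalSpace k] [DiscreteTopology k] [AddCommGroup V]
  [Module k V] [TopologicalSpace V]

variable (k V) in
def continuousDualEval : V →ₗ[k] Module.Dual k (V →L[k] k) :=
  (ContinuousLinearMap.coeLM k).flip

@[simp]
theorem continuousDualEval_apply (v : V) (φ : V →L[k] k) : continuousDualEval k V v φ = φ v :=
  rfl

theorem LinearMap.continuous_of_isOpen_le_ker [IsTopologicalAddGroup V] (f : V →ₗ[k] k)
    {N : Submodule k V} (hN : IsOpen (N : Set V)) (hle : N ≤ LinearMap.ker f) : Continuous f := by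
  refine continuous_of_continuousAt_zero f ?_
  rw [ContinuousAt, map_zero, nhds_discrete k, tendsto_pure]
  exact mem_of_superset (hN.mem_nhds N.zero_mem) hle

theorem IsLinearTopology'.exists_continuousLinearMap_of_notMem (h : IsLinearTopology' k V)
    {N : Submodule k V} (hN : IsClosed (N : Set V)) {x : V} (hx : x ∉ N) :
    ∃ φ : V →L[k] k, (∀ n ∈ N, φ n = 0) ∧ φ x ≠ 0 := by
  have := h.isTopologicalAddGroup_s13
  have hNc : (x + ·) ⁻¹' (N : Set V)ᶜ ∈ 𝓝 0 :=
    (continuous_const_add x).tendsto' 0 x (add_zero x) (hN.isOpen_compl.mem_nhds hx)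
  obtain ⟨W, hW, hWN⟩ := h.exists_isOpen_submodule_subset hNc
  have hxNW : x ∉ N ⊔ W := by
    intro hxNW
    obtain ⟨n, hn, w, hw, rfl⟩ := Submodule.mem_sup.1 hxNW
    exact hWN (W.neg_mem hw) (by simpa using hn)
  obtain ⟨f, hfx, hf⟩ := Submodule.exists_dual_map_eq_bot_of_notMem hxNW inferInstance
  have hfNW : N ⊔ W ≤ LinearMap.ker f := LinearMap.le_ker_iff_map.2 hf
  exact ⟨⟨f, f.continuous_of_isOpen_le_ker hW (le_sup_right.trans hfNW)⟩,
    fun n hn => hfNW (Submodule.mem_sup_left hn), hfx⟩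

theorem continuousDualEval_injective (h : IsLinearTopology' k V) [T2Space V] :
    Function.Injective (continuousDualEval k V) := by
  refine (injective_iff_map_eq_zero _).2 fun v hv => ?_
  by_contra hv0
  obtain ⟨φ, -, hφ⟩ := h.exists_continuousLinearMap_of_notMem (N := ⊥)
    (by simp) (by simpa using hv0)
  exact hφ (LinearMap.congr_fun hv φ)

end ContinuousDual

section LinearlyCompact

variable {k V : Type*} [Field k] [TopologicalSpace k] [DiscreteTopology k] [AddCommGroup V]
  [Module k V] [TopologicalSpace V]

theorem IsLinearlyCompact.exists_forall_apply_eq (hc : IsLinearlyCompact k V) {T : Type*}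
    (φ : T → V →L[k] k) (c : T → k) (hfin : ∀ s : Finset T, ∃ v, ∀ t ∈ s, φ t v = c t) :
    ∃ v, ∀ t, φ t v = c t := by
  let C : T → Set V := fun t => {v | φ t v = c t}
  have hcoset : ∀ t, ∃ (N : Submodule k V) (x : V), IsClosed (N : Set V) ∧
      C t = (x + ·) '' (N : Set V) := fun t => by
    obtain ⟨x, hx⟩ := hfin {t}
    refine ⟨LinearMap.ker (φ t : V →ₗ[k] k), x, (φ t).isClosed_ker, ?_⟩
    rw [← LinearMap.setOf_apply_eq_eq_image_add_ker]
    simp [C, hx t (Finset.mem_singleton_self t)]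
  have hfip : ∀ 𝒟 ⊆ Set.range C, 𝒟.Finite → (⋂₀ 𝒟).Nonempty := by
    intro 𝒟 h𝒟 h𝒟fin
    rw [← Set.image_univ] at h𝒟
    obtain ⟨s, -, hs, rfl⟩ := Set.exists_subset_image_finite_and.1 ⟨𝒟, h𝒟, h𝒟fin, rfl⟩
    obtain ⟨v, hv⟩ := hfin hs.toFinset
    exact ⟨v, by rintro _ ⟨t, ht, rfl⟩; exact hv t (hs.mem_toFinset.2 ht)⟩
  obtain ⟨v, hv⟩ := hc.2.2 (Set.range C) (by rintro _ ⟨t, rfl⟩; exact hcoset t) hfip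
  exact ⟨v, fun t => hv (C t) ⟨t, rfl⟩⟩

theorem IsLinearlyCompact.surjective_continuousDualEval (hc : IsLinearlyCompact k V) :
    Function.Surjective (continuousDualEval k V) := by
  intro l
  obtain ⟨v, hv⟩ := hc.exists_forall_apply_eq id l fun s =>
    (exists_forall_apply_eq_of_injective (B := ContinuousLinearMap.coeLM k)
      ContinuousLinearMap.coe_injective l (fun φ : s => φ.1)).imp fun v hv φ hφ => hv ⟨φ, hφ⟩
  exact ⟨v, LinearMap.ext hv⟩

theorem continuous_comp_mkQ_of_isOpen [IsTopologicalAddGroup V] {N : Submodule k V}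
    (hN : IsOpen (N : Set V)) (f : Module.Dual k (V ⧸ N)) : Continuous (f ∘ₗ N.mkQ) :=
  (f ∘ₗ N.mkQ).continuous_of_isOpen_le_ker hN (N.ker_mkQ.ge.trans (LinearMap.ker_le_ker_comp _ _))

theorem IsLinearlyCompact.finiteDimensional_quotient (hc : IsLinearlyCompact k V)
    {N : Submodule k V} (hN : IsOpen (N : Set V)) : FiniteDimensional k (V ⧸ N) := by
  classical
  have := hc.1.isTopologicalAddGroup_s13
  let b := Module.Basis.ofVectorSpace k (V ⧸ N)
  -- A point at which all coordinate functionals equal `1` would have infinite support.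
  obtain ⟨v, hv⟩ := hc.exists_forall_apply_eq
    (fun j => ⟨_, continuous_comp_mkQ_of_isOpen hN (b.coord j)⟩) (fun _ => 1)
    fun s => by
      obtain ⟨x, hx⟩ := N.mkQ_surjective (∑ j ∈ s, b j)
      exact ⟨x, fun j hj => by simp [hx, Finsupp.single_apply, hj]⟩
  have : Finite (Module.Basis.ofVectorSpaceIndex k (V ⧸ N)) := by
    refine Set.finite_univ_iff.1 ((b.repr (N.mkQ v)).support.finite_toSet.subset fun j _ => ?_)
    exact Finsupp.mem_support_iff.2 fun h => one_ne_zero ((hv j).symm.trans h)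
  exact Module.Finite.of_basis b

end LinearlyCompact

section Forward

variable {k : Type u} {V : Type v} [Field k] [TopologicalSpace k] [DiscreteTopology k]
  [AddCommGroup V] [Module k V] [TopologicalSpace V]

theorem Module.Basis.apply_eq_zero_of_forall_mem_support {I : Type*}
    (b : Module.Basis I k (V →L[k] k)) (φ : V →L[k] k) {v : V}
    (hv : ∀ i ∈ (b.repr φ).support, b i v = 0) : φ v = 0 := by
  rw [← b.linearCombination_repr φ, Finsupp.linearCombination_apply, Finsupp.sum,
    sum_apply]
  exact Finset.sum_eq_zero fun i hi => by simp [hv i hi]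

theorem IsLinearlyCompact.exists_finset_setOf_basis_eq_zero_subset (hc : IsLinearlyCompact k V)
    {I : Type*} (b : Module.Basis I k (V →L[k] k)) {U : Set V} (hU : U ∈ 𝓝 0) :
    ∃ J : Finset I, {v | ∀ j ∈ J, b j v = 0} ⊆ U := by
  classical
  have := hc.1.isTopologicalAddGroup_s13
  obtain ⟨N, hN, hNU⟩ := hc.1.exists_isOpen_submodule_subset hU
  have := hc.finiteDimensional_quotient hN
  let c := Module.finBasis k (V ⧸ N)
  let ψ : Fin _ → V →L[k] k := fun m =>
    ⟨_, continuous_comp_mkQ_of_isOpen hN (c.coord m)⟩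
  refine ⟨Finset.univ.biUnion fun m => (b.repr (ψ m)).support, fun v hv => hNU ?_⟩
  have hψv : ∀ m, c.coord m (N.mkQ v) = 0 := fun m =>
    b.apply_eq_zero_of_forall_mem_support (ψ m) fun i hi =>
      hv i (Finset.mem_biUnion.2 ⟨m, Finset.mem_univ m, hi⟩)
  simpa using c.forall_coord_eq_zero_iff.1 hψv

theorem IsLinearlyCompact.exists_continuousLinearEquiv_pi (hc : IsLinearlyCompact k V) :
    ∃ I : Type (max u v), Nonempty (V ≃L[k] (I → k)) := by
  have := hc.1.isTopologicalAddGroup_s13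
  have := hc.2.1
  let b := Module.Basis.ofVectorSpace k (V →L[k] k)
  let e : V ≃ₗ[k] (_ → k) := (LinearEquiv.ofBijective (continuousDualEval k V)
    ⟨continuousDualEval_injective hc.1, hc.surjective_continuousDualEval⟩).trans (b.constr k).symm
  have he : ∀ v i, e v i = b i v := fun _ _ => rfl
  refine ⟨_, ⟨{ e with
    continuous_toFun := continuous_pi fun i => by simpa [he] using (b i).continuous
    continuous_invFun := ?_ }⟩⟩
  refine continuous_of_continuousAt_zero e.symm ?_
  rw [ContinuousAt, map_zero]
  intro U hU
  obtain ⟨J, hJ⟩ := hc.exists_finset_setOf_basis_eq_zero_subset b hU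
  rw [Filter.mem_map]
  filter_upwards [set_pi_mem_nhds J.finite_toSet fun j _ => (isOpen_discrete {0}).mem_nhds rfl]
    with y hy
  refine hJ fun j hj => ?_
  simpa [← he] using hy j hj

end Forward

section Backward

variable {k V : Type*} [Field k] [TopologicalSpace k] [DiscreteTopology k] [AddCommGroup V]
  [Module k V] [TopologicalSpace V]

theorem ContinuousLinearMap.exists_finset_apply_eq_sum {I : Type*} [DecidableEq I]
    (ψ : (I → k) →L[k] k) : ∃ J : Finset I, ∀ x, ψ x = ∑ j ∈ J, x j * ψ (Pi.single j 1) := by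
  have hker : ψ ⁻¹' {0} ∈ 𝓝 (0 : I → k) :=
    ((isOpen_discrete {0}).preimage ψ.continuous).mem_nhds (by simp)
  rw [nhds_pi, Filter.mem_pi'] at hker
  obtain ⟨J, t, ht, hJ⟩ := hker
  refine ⟨J, fun x => ?_⟩
  have hrest : ψ (x - ∑ j ∈ J, x j • Pi.single j 1) = 0 := hJ fun j hj => by
    simpa [Finset.sum_apply, Pi.single_apply, Finset.mem_coe.1 hj] using mem_of_mem_nhds (ht j)
  rw [map_sub, sub_eq_zero] at hrest
  simp [hrest, map_sum]

theorem ContinuousLinearEquiv.surjective_continuousDualEval {I : Type*} (e : V ≃L[k] (I → k)) :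
    Function.Surjective (continuousDualEval k V) := by
  classical
  intro l
  let π : I → V →L[k] k := fun i => (ContinuousLinearMap.proj i).comp (e : V →L[k] I → k)
  refine ⟨e.symm fun i => l (π i), LinearMap.ext fun φ => ?_⟩
  obtain ⟨J, hJ⟩ := (φ.comp (e.symm : (I → k) →L[k] V)).exists_finset_apply_eq_sum
  have hφ : φ = ∑ j ∈ J, φ (e.symm (Pi.single j 1)) • π j := by
    ext v
    simpa [π, mul_comm] using hJ (e v)
  conv_rhs => rw [hφ]
  simpa [π, mul_comm, map_sum] using hJ fun i => l (π i)

theorem isLinearlyCompact_of_surjective_continuousDualEval (h : IsLinearTopology' k V)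
    [T2Space V] (hev : Function.Surjective (continuousDualEval k V)) : IsLinearlyCompact k V := by
  refine ⟨h, ‹_›, fun 𝒞 hco hfip => ?_⟩
  let A : Set ((V →L[k] k) × k) := {p | ∃ C ∈ 𝒞, ∀ z ∈ C, p.1 z = p.2}
  let ev : V → (V →L[k] k) × k →ₗ[k] k := fun z =>
    continuousDualEval k V z ∘ₗ LinearMap.fst k _ _ - LinearMap.snd k _ _
  have hcons : ((0, 1) : (V →L[k] k) × k) ∉ Submodule.span k A := by
    intro h01
    obtain ⟨s, hsA, hs⟩ := Submodule.mem_span_finite_of_mem_span h01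
    have : ∀ p : s, ∃ C ∈ 𝒞, ∀ z ∈ C, p.1.1 z = p.1.2 := fun p => hsA p.2
    choose C hC hCp using this
    obtain ⟨z, hz⟩ := hfip (Set.range C) (Set.range_subset_iff.2 hC) (Set.finite_range C)
    have : Submodule.span k s ≤ LinearMap.ker (ev z) := Submodule.span_le.2 fun p hp => by
      simpa [ev, sub_eq_zero] using hCp ⟨p, hp⟩ z (hz _ ⟨_, rfl⟩)
    simpa [ev] using this hs
  -- `Λ` kills every constraint but not `(0, 1)`, so `Λ (φ, c) = 0` determines `c` linearly in `φ`.
  obtain ⟨Λ, hΛ01, hΛA⟩ := Submodule.exists_dual_map_eq_bot_of_notMem hcons inferInstance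
  obtain ⟨y, hy⟩ := hev (-(Λ (0, 1))⁻¹ • Λ ∘ₗ LinearMap.inl k _ k)
  have hyA : ∀ p ∈ A, p.1 y = p.2 := by
    intro p hp
    have hΛp : Λ p = 0 := LinearMap.le_ker_iff_map.2 hΛA (Submodule.subset_span hp)
    have hsplit : Λ p = Λ (p.1, 0) + p.2 * Λ (0, 1) := by
      rw [← smul_eq_mul, ← map_smul, ← map_add]
      simp
    have := LinearMap.congr_fun hy p.1
    simp only [continuousDualEval_apply, LinearMap.smul_apply, LinearMap.coe_comp,
      LinearMap.coe_inl, Function.comp_apply, smul_eq_mul, neg_mul] at this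
    rw [this]
    field_simp
    linear_combination hsplit - hΛp
  refine ⟨y, fun C hC => ?_⟩
  obtain ⟨N, x, hN, rfl⟩ := hco C hC
  by_contra hyC
  obtain ⟨φ, hφN, hφ⟩ := h.exists_continuousLinearMap_of_notMem hN (x := y - x)
    fun hyx => hyC ⟨y - x, hyx, add_sub_cancel x y⟩
  have : φ y = φ x := hyA (φ, φ x) ⟨_, hC, by rintro _ ⟨n, hn, rfl⟩; simp [hφN n hn]⟩
  exact hφ (by simp [this])

end Backward

/-- A linearly topologized vector space over a field `k` is linearly compact if and only
if it is isomorphic as a topological vector space to a product `k^I` of copies of `k`,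
each factor discrete and the product carrying the product topology. -/
theorem linearlyCompact_iff_product_of_copies (k : Type u) (V : Type v) [Field k]
    [AddCommGroup V] [Module k V] [TopologicalSpace V] (hlin : IsLinearTopology' k V) :
    IsLinearlyCompact k V ↔
      ∃ (I : Type (max u v)) (e : V ≃ₗ[k] (I → k)),
        @Continuous V (I → k) _ (@Pi.topologicalSpace I (fun _ => k) (fun _ => ⊥)) e ∧
        @Continuous (I → k) V (@Pi.topologicalSpace I (fun _ => k) (fun _ => ⊥)) _ e.symm := by
  let : TopologicalSpace k := ⊥
  have : DiscreteTopology k := ⟨rfl⟩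
  constructor
  · intro hc
    obtain ⟨I, ⟨e⟩⟩ := hc.exists_continuousLinearEquiv_pi
    exact ⟨I, e.toLinearEquiv, e.continuous, e.symm.continuous⟩
  · rintro ⟨I, e, he, he_symm⟩
    let eL : V ≃L[k] (I → k) := { e with continuous_toFun := he, continuous_invFun := he_symm }
    have : T2Space V := eL.toHomeomorph.isEmbedding.t2Space
    exact isLinearlyCompact_of_surjective_continuousDualEval hlin eL.surjective_continuousDualEval
end
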